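/- (Key total-variation claim in the proof of Claim 2, inequality (69) of the paper.) In the random BC code construction described in the context, there exists τ > 0 such that the probability that max_{m_𝒴∈ℳ_𝒴} d(P_V^{(m_𝒴)}, P̃_V^{(m_𝒴)}) ≥ e^{−nτ} converges to zero as the blocklength n tends to infinity. -/

import Mathlib

open scoped Classical
open Finset

noncomputable section

/-- `P` is a probability mass function on the finite type `X`. -/
def IsPMF {X : Type*} [Fintype X] (P : X → ℝ) : Prop :=
  (∀ x, 0 ≤ P x) ∧ ∑ x, P x = 1

/-- `W` is a (discrete memoryless) channel from `X` to `Y`. -/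
def IsChannel {X Y : Type*} [Fintype Y] (W : X → Y → ℝ) : Prop :=
  (∀ x y, 0 ≤ W x y) ∧ ∀ x, ∑ y, W x y = 1

/-- The `n`-fold memoryless extension `W^n(𝐲|𝐱) = ∏ᵢ W(yᵢ|xᵢ)`. -/
def Wn {X Y : Type*} (W : X → Y → ℝ) (n : ℕ) (x : Fin n → X) (y : Fin n → Y) : ℝ :=
  ∏ i, W (x i) (y i)

/-- Mutual information `I(P,W)` (natural logarithm), with the convention that
terms with `P x * W x y = 0` contribute `0`. -/
def mutInf {X Y : Type*} [Fintype X] [Fintype Y] (P : X → ℝ) (W : X → Y → ℝ) : ℝ :=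
  ∑ x, ∑ y, if P x * W x y = 0 then 0
    else P x * W x y * Real.log (W x y / ∑ x', P x' * W x' y)

/-- The error requirements of an `(n, M, l1, l2)` ID code for the DMC `W`:
maximum probability of missed identification at most `l1`, maximum probability
of wrong identification at most `l2`. -/
def IDCodeErr {X Y M : Type*} [Fintype X] [Fintype Y]
    (n : ℕ) (W : X → Y → ℝ) (Q : M → (Fin n → X) → ℝ)
    (D : M → Finset (Fin n → Y)) (l1 l2 : ℝ) : Prop :=
  (∀ m, ∑ x, Q m x * ∑ y ∈ (D m)ᶜ, Wn W n x y ≤ l1) ∧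
  (∀ m m', m ≠ m' → ∑ x, Q m x * ∑ y ∈ D m', Wn W n x y ≤ l2)

/-- `(n, M, l1, l2)` ID code for the DMC `W`. -/
def IsIDCode {X Y M : Type*} [Fintype X] [Fintype Y]
    (n : ℕ) (W : X → Y → ℝ) (Q : M → (Fin n → X) → ℝ)
    (D : M → Finset (Fin n → Y)) (l1 l2 : ℝ) : Prop :=
  (∀ m, IsPMF (Q m)) ∧ IDCodeErr n W Q D l1 l2

/-- Number of ID messages: `⌈exp(exp(nR))⌉`. -/
def Kmsg (R : ℝ) (n : ℕ) : ℕ := Nat.ceil (Real.exp (Real.exp (n * R)))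

/-- Size of the pool index set: `⌈e^{n R_pool}⌉`. -/
def Kpool (Rpool : ℝ) (n : ℕ) : ℕ := Nat.ceil (Real.exp (n * Rpool))

/-- Probability, under independent Bernoulli(p) selection of each pair `(a,b)`,
of the outcome `ω : A → B → Bool`. -/
def bernWeight {A B : Type*} [Fintype A] [Fintype B] (p : ℝ) (ω : A → B → Bool) : ℝ :=
  ∏ a, ∏ b, if ω a b then p else 1 - p

/-- The (random) index set `V_a ⊆ B` determined by the outcome `ω`. -/
def idxSet {A B : Type*} [Fintype B] (ω : A → B → Bool) (a : A) : Finset B :=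
  Finset.univ.filter (fun b => ω a b = true)

/-- The fixed pool index `v*`. -/
def vstar (Rpool : ℝ) (n : ℕ) : Fin (Kpool Rpool n) :=
  ⟨0, Nat.ceil_pos.mpr (Real.exp_pos _)⟩

/-- An outcome of the random BC code construction: the index sets
`{V_{m_Y}}`, the index sets `{V_{m_Z}}`, and the codeword indices
`{V_{m_Y, m_Z}}`. -/
abbrev BCOutcome (RY RZ Rpool : ℝ) (n : ℕ) : Type :=
  (Fin (Kmsg RY n) → Fin (Kpool Rpool n) → Bool)
  × (Fin (Kmsg RZ n) → Fin (Kpool Rpool n) → Bool)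
  × (Fin (Kmsg RY n) → Fin (Kmsg RZ n) → Fin (Kpool Rpool n))

/-- Probability of the outcome `ω`: the index sets are chosen by independent
Bernoulli selections with parameters `e^{-n(R_pool - R̃_Y)}` and
`e^{-n(R_pool - R̃_Z)}`; and, conditionally on them and independently across
message pairs, `V_{m_Y,m_Z}` is uniform on `V_{m_Y} ∩ V_{m_Z}` if this
intersection is nonempty, and uniform on the whole pool otherwise. -/
def bcWeight (RY RZ RtY RtZ Rpool : ℝ) (n : ℕ) (ω : BCOutcome RY RZ Rpool n) : ℝ :=
  bernWeight (Real.exp (-(n * (Rpool - RtY)))) ω.1 *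
  bernWeight (Real.exp (-(n * (Rpool - RtZ)))) ω.2.1 *
  ∏ my, ∏ mz,
    (if (idxSet ω.1 my ∩ idxSet ω.2.1 mz).Nonempty then
      (if ω.2.2 my mz ∈ idxSet ω.1 my ∩ idxSet ω.2.1 mz then
        ((idxSet ω.1 my ∩ idxSet ω.2.1 mz).card : ℝ)⁻¹ else 0)
    else ((Kpool Rpool n : ℕ) : ℝ)⁻¹)

/-- The PMF `P_V^{(m_Y)}` on the pool indices: the distribution of
`V_{m_Y, M_Z}` with `M_Z` uniform. -/
def PVmy (RY RZ Rpool : ℝ) (n : ℕ) (ω : BCOutcome RY RZ Rpool n)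
    (my : Fin (Kmsg RY n)) (v : Fin (Kpool Rpool n)) : ℝ :=
  ((Kmsg RZ n : ℕ) : ℝ)⁻¹ * ∑ mz, if ω.2.2 my mz = v then 1 else 0

/-- The PMF `P̃_V^{(m_Y)}`: uniform on `V_{m_Y}` if nonempty, else the point
mass at `v*`. -/
def PtildeVmy (RY RZ Rpool : ℝ) (n : ℕ) (ω : BCOutcome RY RZ Rpool n)
    (my : Fin (Kmsg RY n)) (v : Fin (Kpool Rpool n)) : ℝ :=
  if (idxSet ω.1 my).Nonempty then
    (if v ∈ idxSet ω.1 my then ((idxSet ω.1 my).card : ℝ)⁻¹ else 0)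
  else (if v = vstar Rpool n then 1 else 0)

/-- Total-variation distance between PMFs on a finite type. -/
def tvDist {V : Type*} [Fintype V] (p q : V → ℝ) : ℝ :=
  (1 / 2) * ∑ v, |p v - q v|

/-!
Fix `m_𝒴` and write `p_𝒴, p_𝒵` for the inclusion probabilities and `K = |𝒱|`. Only `V_{m_𝒴}`
and the row `(V_{m_𝒴,m_𝒵})_{m_𝒵}` matter, and given `V_{m_𝒴} = s` the entries of the row are
i.i.d. (the sets `V_{m_𝒵}` being independent) with a law `Q_s` that is invariant under
permutations fixing `s` and puts mass `(1 - p_𝒵)^{|s|} / K` on each point outside `s`; hence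
`d(Q_s, Unif(s)) ≤ (1 - p_𝒵)^{|s|}`. A multiplicative Chernoff bound gives `|V_{m_𝒴}| > K p_𝒴 / 2`
outside probability `exp(-c e^{n R̃_𝒴})`, and then `(1 - p_𝒵)^{|s|} ≤ e^{-n}/2` because
`K p_𝒴 p_𝒵 ≥ e^{n (R̃_𝒴 + R̃_𝒵 - R_pool)}`. Hoeffding bounds for each coordinate of the empirical
law of the `exp(e^{n R_𝒵})` samples then give `d(P_V^{(m_𝒴)}, Q_s) < e^{-n}/2` outside a doubly
exponentially small event. A union bound over the `exp(e^{n R_𝒴})` messages `m_𝒴`, with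
`R_𝒴 < R̃_𝒴`, leaves `O(e^{-n})`, so `τ = 1` works.
-/

namespace BCCode

theorem sum_filter_le_sum_sum_filter {Ω ι : Type*} [Fintype Ω] (s : Finset ι) {w : Ω → ℝ}
    (hw : ∀ ω, 0 ≤ w ω) {p : Ω → Prop} [DecidablePred p] {q : ι → Ω → Prop}
    [∀ i, DecidablePred (q i)] (hpq : ∀ ω, p ω → ∃ i ∈ s, q i ω) :
    ∑ ω ∈ univ.filter p, w ω ≤ ∑ i ∈ s, ∑ ω ∈ univ.filter (q i), w ω := by
  simp only [sum_filter]
  rw [sum_comm]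
  refine sum_le_sum fun ω _ => ?_
  split_ifs with hp
  · obtain ⟨i, hi, hq⟩ := hpq ω hp
    calc w ω = if q i ω then w ω else 0 := (if_pos hq).symm
      _ ≤ ∑ j ∈ s, if q j ω then w ω else 0 :=
        single_le_sum (f := fun j => if q j ω then w ω else 0)
          (fun j _ => ite_nonneg (hw ω) le_rfl) hi
  · exact sum_nonneg fun j _ => ite_nonneg (hw ω) le_rfl

theorem sum_filter_exists_le_sum_sum_filter {Ω ι : Type*} [Fintype Ω] [Fintype ι] {w : Ω → ℝ}
    (hw : ∀ ω, 0 ≤ w ω) (q : ι → Ω → Prop) [∀ i, DecidablePred (q i)]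
    [DecidablePred fun ω => ∃ i, q i ω] :
    ∑ ω ∈ univ.filter (fun ω => ∃ i, q i ω), w ω ≤ ∑ i, ∑ ω ∈ univ.filter (q i), w ω :=
  sum_filter_le_sum_sum_filter univ hw fun _ hω => hω.imp fun i h => ⟨mem_univ i, h⟩

theorem le_one_of_sum_eq_one {S : Type*} [Fintype S] {μ : S → ℝ} (hμ0 : ∀ s, 0 ≤ μ s)
    (hμ1 : ∑ s, μ s = 1) (v : S) : μ v ≤ 1 := by
  rw [← hμ1]
  exact single_le_sum (fun s _ => hμ0 s) (mem_univ v)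

theorem sum_prod_eq_one {ι S : Type*} [Fintype ι] [DecidableEq ι] [Fintype S] {μ : S → ℝ}
    (hμ1 : ∑ s, μ s = 1) : ∑ f : ι → S, ∏ i, μ (f i) = 1 := by
  rw [← Fintype.prod_sum fun _ s => μ s, hμ1, prod_const_one]

theorem one_add_pow_le_exp {x : ℝ} (hx : 0 ≤ 1 + x) (N : ℕ) :
    (1 + x) ^ N ≤ Real.exp (N * x) := by
  rw [Real.exp_nat_mul]
  exact pow_le_pow_left₀ hx (by linarith [Real.add_one_le_exp x]) N

theorem sum_prod_filter_le_sum_le_exp_mul_pow {ι S : Type*} [Fintype ι] [DecidableEq ι]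
    [Fintype S] (μ : S → ℝ) (hμ : ∀ s, 0 ≤ μ s) (g : S → ℝ) {t : ℝ} (ht : 0 ≤ t) (c : ℝ) :
    ∑ f ∈ univ.filter (fun f : ι → S => c ≤ ∑ i, g (f i)), ∏ i, μ (f i)
      ≤ Real.exp (-(t * c)) * (∑ s, μ s * Real.exp (t * g s)) ^ Fintype.card ι := by
  calc ∑ f ∈ univ.filter (fun f : ι → S => c ≤ ∑ i, g (f i)), ∏ i, μ (f i)
      ≤ ∑ f ∈ univ.filter (fun f : ι → S => c ≤ ∑ i, g (f i)),
          (∏ i, μ (f i)) * Real.exp (t * (∑ i, g (f i) - c)) := by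
        refine sum_le_sum fun f hf => le_mul_of_one_le_right (prod_nonneg fun i _ => hμ _) ?_
        exact Real.one_le_exp (mul_nonneg ht (sub_nonneg.2 (mem_filter.1 hf).2))
    _ ≤ ∑ f : ι → S, (∏ i, μ (f i)) * Real.exp (t * (∑ i, g (f i) - c)) :=
        sum_le_sum_of_subset_of_nonneg (filter_subset _ _) fun f _ _ =>
          mul_nonneg (prod_nonneg fun i _ => hμ _) (Real.exp_nonneg _)
    _ = Real.exp (-(t * c)) * ∑ f : ι → S, ∏ i, μ (f i) * Real.exp (t * g (f i)) := by
        rw [mul_sum]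
        refine sum_congr rfl fun f _ => ?_
        rw [prod_mul_distrib, mul_sub, mul_sum, Real.exp_sub, Real.exp_sum, div_eq_mul_inv,
          ← Real.exp_neg]
        ring
    _ = Real.exp (-(t * c)) * (∑ s, μ s * Real.exp (t * g s)) ^ Fintype.card ι := by
        rw [← Fintype.prod_sum (fun _ s => μ s * Real.exp (t * g s)), prod_const, card_univ]

theorem sum_mul_exp_mul_indicator {S : Type*} [Fintype S] [DecidableEq S] (μ : S → ℝ)
    (hμ : ∑ s, μ s = 1) (v : S) (u : ℝ) :
    ∑ s, μ s * Real.exp (u * if s = v then 1 else 0) = 1 + μ v * (Real.exp u - 1) := by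
  have hsplit : ∀ s, μ s * Real.exp (u * if s = v then 1 else 0)
      = μ s + if s = v then μ v * (Real.exp u - 1) else 0 := by
    intro s
    split_ifs with h
    · subst h; rw [mul_one]; ring
    · simp
  simp only [hsplit, sum_add_distrib, hμ, sum_ite_eq']
  simp

theorem sum_prod_filter_le_count_le_exp {ι S : Type*} [Fintype ι] [DecidableEq ι] [Fintype S]
    [DecidableEq S] {μ : S → ℝ} (hμ0 : ∀ s, 0 ≤ μ s) (hμ1 : ∑ s, μ s = 1) (v : S) {t : ℝ}
    (ht : 0 ≤ t) (c : ℝ) :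
    ∑ f ∈ univ.filter (fun f : ι → S => c ≤ ∑ i, if f i = v then (1 : ℝ) else 0), ∏ i, μ (f i)
      ≤ Real.exp (-(t * c) + Fintype.card ι * (μ v * (Real.exp t - 1))) := by
  refine (sum_prod_filter_le_sum_le_exp_mul_pow (ι := ι) μ hμ0
    (fun s => if s = v then 1 else 0) ht c).trans ?_
  rw [sum_mul_exp_mul_indicator μ hμ1, Real.exp_add]
  refine mul_le_mul_of_nonneg_left (one_add_pow_le_exp ?_ _) (Real.exp_nonneg _)
  nlinarith [hμ0 v, Real.one_le_exp ht]

theorem sum_prod_filter_count_le_le_exp {ι S : Type*} [Fintype ι] [DecidableEq ι] [Fintype S]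
    [DecidableEq S] {μ : S → ℝ} (hμ0 : ∀ s, 0 ≤ μ s) (hμ1 : ∑ s, μ s = 1) (v : S) {t : ℝ}
    (ht : 0 ≤ t) (c : ℝ) :
    ∑ f ∈ univ.filter (fun f : ι → S => ∑ i, (if f i = v then (1 : ℝ) else 0) ≤ c), ∏ i, μ (f i)
      ≤ Real.exp (t * c + Fintype.card ι * (μ v * (Real.exp (-t) - 1))) := by
  have hneg := sum_prod_filter_le_sum_le_exp_mul_pow (ι := ι) μ hμ0
    (fun s => -if s = v then 1 else 0) ht (-c)
  simp only [sum_neg_distrib, neg_le_neg_iff, mul_neg, ← neg_mul] at hneg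
  refine hneg.trans ?_
  rw [sum_mul_exp_mul_indicator μ hμ1, Real.exp_add, neg_neg]
  refine mul_le_mul_of_nonneg_left (one_add_pow_le_exp ?_ _) (Real.exp_nonneg _)
  nlinarith [hμ0 v, le_one_of_sum_eq_one hμ0 hμ1 v, Real.exp_pos (-t),
    Real.exp_le_one_iff.2 (neg_nonpos.2 ht)]

theorem sum_prod_filter_add_le_count_le_exp {ι S : Type*} [Fintype ι] [DecidableEq ι]
    [Fintype S] [DecidableEq S] {μ : S → ℝ} (hμ0 : ∀ s, 0 ≤ μ s) (hμ1 : ∑ s, μ s = 1) (v : S)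
    {η : ℝ} (hη0 : 0 ≤ η) (hη1 : η ≤ 1) :
    ∑ f ∈ univ.filter (fun f : ι → S =>
        Fintype.card ι * (μ v + η) ≤ ∑ i, if f i = v then (1 : ℝ) else 0), ∏ i, μ (f i)
      ≤ Real.exp (-(Fintype.card ι * η ^ 2 / 4)) := by
  refine (sum_prod_filter_le_count_le_exp hμ0 hμ1 v (div_nonneg hη0 zero_le_two) _).trans
    (Real.exp_le_exp.2 ?_)
  have hexp : Real.exp (η / 2) - 1 ≤ η / 2 + (η / 2) ^ 2 := by
    have := Real.abs_exp_sub_one_sub_id_le (x := η / 2) (by rw [abs_le]; constructor <;> linarith)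
    linarith [le_abs_self (Real.exp (η / 2) - 1 - η / 2)]
  have hq := le_one_of_sum_eq_one hμ0 hμ1 v
  have key : μ v * (Real.exp (η / 2) - 1) ≤ η / 2 * (μ v + η) - η ^ 2 / 4 := by
    nlinarith [mul_le_mul_of_nonneg_left hexp (hμ0 v)]
  nlinarith [mul_le_mul_of_nonneg_left key (Nat.cast_nonneg (Fintype.card ι) : (0 : ℝ) ≤ _)]

theorem sum_prod_filter_count_le_sub_le_exp {ι S : Type*} [Fintype ι] [DecidableEq ι]
    [Fintype S] [DecidableEq S] {μ : S → ℝ} (hμ0 : ∀ s, 0 ≤ μ s) (hμ1 : ∑ s, μ s = 1) (v : S)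
    {η : ℝ} (hη0 : 0 ≤ η) (hη1 : η ≤ 1) :
    ∑ f ∈ univ.filter (fun f : ι → S =>
        ∑ i, (if f i = v then (1 : ℝ) else 0) ≤ Fintype.card ι * (μ v - η)), ∏ i, μ (f i)
      ≤ Real.exp (-(Fintype.card ι * η ^ 2 / 4)) := by
  refine (sum_prod_filter_count_le_le_exp hμ0 hμ1 v (div_nonneg hη0 zero_le_two) _).trans
    (Real.exp_le_exp.2 ?_)
  have hexp : Real.exp (-(η / 2)) - 1 ≤ -(η / 2) + (η / 2) ^ 2 := by
    have := Real.abs_exp_sub_one_sub_id_le (x := -(η / 2))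
      (by rw [abs_le]; constructor <;> linarith)
    linarith [le_abs_self (Real.exp (-(η / 2)) - 1 - -(η / 2))]
  have hq := le_one_of_sum_eq_one hμ0 hμ1 v
  have key : μ v * (Real.exp (-(η / 2)) - 1) ≤ -(η / 2 * (μ v - η)) - η ^ 2 / 4 := by
    nlinarith [mul_le_mul_of_nonneg_left hexp (hμ0 v)]
  nlinarith [mul_le_mul_of_nonneg_left key (Nat.cast_nonneg (Fintype.card ι) : (0 : ℝ) ≤ _)]

theorem sum_prod_filter_count_le_half_le_exp {ι : Type*} [Fintype ι] [DecidableEq ι] {p : ℝ}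
    (hp0 : 0 ≤ p) (hp1 : p ≤ 1) :
    ∑ a ∈ univ.filter (fun a : ι → Bool =>
        ∑ i, (if a i = true then (1 : ℝ) else 0) ≤ Fintype.card ι * p / 2),
        ∏ i, (if a i then p else 1 - p)
      ≤ Real.exp (-((1 - Real.log 2) / 2 * (Fintype.card ι * p))) := by
  have h := sum_prod_filter_count_le_le_exp (ι := ι) (μ := fun b : Bool => if b then p else 1 - p)
    (fun b => by cases b <;> simp <;> linarith) (by simp) true (Real.log_nonneg one_le_two)
    (Fintype.card ι * p / 2)
  refine h.trans (le_of_eq (congrArg Real.exp ?_))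
  rw [Real.exp_neg, Real.exp_log two_pos]
  simp only [if_true]
  ring

def empirical {ι S : Type*} [Fintype ι] [DecidableEq S] (f : ι → S) (s : S) : ℝ :=
  (Fintype.card ι : ℝ)⁻¹ * ∑ i, if f i = s then 1 else 0

theorem card_mul_empirical {ι S : Type*} [Fintype ι] [DecidableEq S] (f : ι → S) (s : S) :
    Fintype.card ι * empirical f s = ∑ i, if f i = s then 1 else 0 := by
  rcases isEmpty_or_nonempty ι with h | h
  · simp
  · rw [empirical, ← mul_assoc, mul_inv_cancel₀ (by positivity), one_mul]

theorem tvDist_triangle {S : Type*} [Fintype S] (p q r : S → ℝ) :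
    tvDist p r ≤ tvDist p q + tvDist q r := by
  rw [tvDist, tvDist, tvDist, ← mul_add, ← sum_add_distrib]
  gcongr with s
  exact abs_sub_le _ _ _

theorem exists_le_abs_sub_of_le_tvDist {S : Type*} [Fintype S] [Nonempty S] {p q : S → ℝ}
    {ε : ℝ} (h : ε ≤ tvDist p q) : ∃ s, 2 * ε / Fintype.card S ≤ |p s - q s| := by
  by_contra! hlt
  have hsum := sum_lt_sum_of_nonempty univ_nonempty fun s (_ : s ∈ univ) => hlt s
  rw [sum_const, card_univ, nsmul_eq_mul, mul_div_cancel₀ _ (by positivity)] at hsum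
  rw [tvDist] at h
  linarith

theorem sum_prod_filter_le_tvDist_empirical_le {ι S : Type*} [Fintype ι] [DecidableEq ι]
    [Fintype S] [DecidableEq S] [Nonempty S] {μ : S → ℝ} (hμ0 : ∀ s, 0 ≤ μ s)
    (hμ1 : ∑ s, μ s = 1) {ε : ℝ} (hε0 : 0 ≤ ε) (hε1 : ε ≤ 1 / 2) :
    ∑ f ∈ univ.filter (fun f : ι → S => ε ≤ tvDist (empirical f) μ), ∏ i, μ (f i)
      ≤ 2 * Fintype.card S * Real.exp (-(Fintype.card ι * (ε / Fintype.card S) ^ 2)) := by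
  set K : ℝ := (Fintype.card S : ℝ)
  set N : ℝ := (Fintype.card ι : ℝ)
  set η := 2 * ε / K
  have hK : 1 ≤ K := Nat.one_le_cast.2 Fintype.card_pos
  have hη0 : 0 ≤ η := by positivity
  have hη1 : η ≤ 1 := by rw [div_le_one (by positivity)]; linarith
  have hN : 0 ≤ N := Nat.cast_nonneg _
  refine (sum_filter_le_sum_sum_filter (univ : Finset (S × Bool))
    (fun f => prod_nonneg fun i _ => hμ0 (f i))
    (q := fun sb f => if sb.2 then N * (μ sb.1 + η) ≤ ∑ i, (if f i = sb.1 then 1 else 0)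
      else ∑ i, (if f i = sb.1 then 1 else 0) ≤ N * (μ sb.1 - η)) ?_).trans ?_
  · intro f hf
    obtain ⟨s, hs⟩ : ∃ s, η ≤ |empirical f s - μ s| := exists_le_abs_sub_of_le_tvDist hf
    rcases le_abs'.1 hs with hlo | hhi
    · refine ⟨(s, false), mem_univ _, ?_⟩
      simp only [Bool.false_eq_true, if_false, ← card_mul_empirical f s]
      gcongr
      linarith
    · refine ⟨(s, true), mem_univ _, ?_⟩
      simp only [if_true, ← card_mul_empirical f s]
      gcongr
      linarith
  · rw [Fintype.sum_prod_type]
    calc ∑ s, ∑ b : Bool, _ ≤ ∑ _s : S, 2 * Real.exp (-(N * η ^ 2 / 4)) := by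
          refine sum_le_sum fun s _ => ?_
          rw [Fintype.sum_bool, two_mul]
          simp only [if_true, Bool.false_eq_true, if_false]
          exact add_le_add (sum_prod_filter_add_le_count_le_exp hμ0 hμ1 s hη0 hη1)
            (sum_prod_filter_count_le_sub_le_exp hμ0 hμ1 s hη0 hη1)
      _ = 2 * K * Real.exp (-(N * (ε / K) ^ 2)) := by
          have hη : N * η ^ 2 / 4 = N * (ε / K) ^ 2 := by ring
          rw [sum_const, card_univ, nsmul_eq_mul, hη]
          ring

theorem sum_prod_filter_le_tvDist_empirical_le_of_tvDist_le {ι S : Type*} [Fintype ι]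
    [DecidableEq ι] [Fintype S] [DecidableEq S] [Nonempty S] {μ : S → ℝ} (hμ0 : ∀ s, 0 ≤ μ s)
    (hμ1 : ∑ s, μ s = 1) {π : S → ℝ} {ε : ℝ} (hε0 : 0 ≤ ε) (hε1 : ε ≤ 1)
    (hπ : tvDist μ π ≤ ε / 2) :
    ∑ f ∈ univ.filter (fun f : ι → S => ε ≤ tvDist (empirical f) π), ∏ i, μ (f i)
      ≤ 2 * Fintype.card S * Real.exp (-(Fintype.card ι * (ε / 2 / Fintype.card S) ^ 2)) := by
  refine le_trans (sum_le_sum_of_subset_of_nonneg (fun f hf => ?_)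
    fun f _ _ => prod_nonneg fun i _ => hμ0 (f i))
    (sum_prod_filter_le_tvDist_empirical_le hμ0 hμ1 (by linarith) (by linarith))
  rw [mem_filter] at hf ⊢
  exact ⟨hf.1, by linarith [hf.2, tvDist_triangle (empirical f) μ π]⟩

def uniformOn {V : Type*} [DecidableEq V] (s : Finset V) (v : V) : ℝ :=
  if v ∈ s then (s.card : ℝ)⁻¹ else 0

theorem uniformOn_nonneg {V : Type*} [DecidableEq V] (s : Finset V) (v : V) :
    0 ≤ uniformOn s v := by
  unfold uniformOn
  positivity

theorem sum_uniformOn {V : Type*} [Fintype V] [DecidableEq V] {s : Finset V} (hs : s.Nonempty) :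
    ∑ v, uniformOn s v = 1 := by
  simp only [uniformOn]
  rw [sum_ite_mem, univ_inter, sum_const, nsmul_eq_mul,
    mul_inv_cancel₀ (Nat.cast_ne_zero.2 hs.card_pos.ne')]

theorem tvDist_uniformOn_eq {V : Type*} [Fintype V] [DecidableEq V] {q : V → ℝ}
    (hq0 : ∀ v, 0 ≤ q v) (hq1 : ∑ v, q v = 1) {s : Finset V} (hs : s.Nonempty)
    (hconst : ∀ v ∈ s, ∀ w ∈ s, q v = q w) : tvDist q (uniformOn s) = ∑ v ∈ sᶜ, q v := by
  obtain ⟨v₀, hv₀⟩ := hs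
  set m : ℝ := (s.card : ℝ)
  have hm : 0 < m := Nat.cast_pos.2 (card_pos.2 ⟨v₀, hv₀⟩)
  have hin : ∑ v ∈ s, q v = m * q v₀ := by
    rw [sum_congr rfl fun v hv => hconst v hv v₀ hv₀, sum_const, nsmul_eq_mul]
  have hsplit := sum_add_sum_compl s q
  have hout : 0 ≤ ∑ v ∈ sᶜ, q v := sum_nonneg fun v _ => hq0 v
  have hle : q v₀ ≤ 1 / m := by rw [le_div_iff₀ hm]; linarith
  have h_in : ∑ v ∈ s, |q v - uniformOn s v| = 1 - m * q v₀ := by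
    calc ∑ v ∈ s, |q v - uniformOn s v| = ∑ _v ∈ s, (1 / m - q v₀) :=
          sum_congr rfl fun v hv => by
            rw [uniformOn, if_pos hv, hconst v hv v₀ hv₀, abs_sub_comm, one_div,
              abs_of_nonneg (by rw [← one_div]; linarith)]
      _ = 1 - m * q v₀ := by
        rw [sum_const, nsmul_eq_mul]
        change m * (1 / m - q v₀) = _
        field_simp
  have h_out : ∑ v ∈ sᶜ, |q v - uniformOn s v| = ∑ v ∈ sᶜ, q v :=
    sum_congr rfl fun v hv => by
      rw [uniformOn, if_neg (mem_compl.1 hv), sub_zero, abs_of_nonneg (hq0 v)]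
  rw [tvDist, ← sum_add_sum_compl s, h_in, h_out]
  linarith

def bernoulliWeight {V : Type*} [Fintype V] (p : ℝ) (a : V → Bool) : ℝ :=
  ∏ v, if a v then p else 1 - p

def selected {V : Type*} [Fintype V] (a : V → Bool) : Finset V :=
  univ.filter (fun v => a v = true)

/-- The law of the codeword index `V_{m_𝒴,m_𝒵}` given `V_{m_𝒴} = s` and `V_{m_𝒵} = t`. -/
def codewordKernel {V : Type*} [Fintype V] [DecidableEq V] (s t : Finset V) (v : V) : ℝ :=
  if (s ∩ t).Nonempty then uniformOn (s ∩ t) v else (Fintype.card V : ℝ)⁻¹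

/-- The law of the codeword index `V_{m_𝒴,m_𝒵}` given only `V_{m_𝒴} = s`. -/
def codewordLaw {V : Type*} [Fintype V] [DecidableEq V] (p : ℝ) (s : Finset V) (v : V) : ℝ :=
  ∑ b : V → Bool, bernoulliWeight p b * codewordKernel s (selected b) v

section IndexSets

variable {V : Type*} [Fintype V]

theorem bernoulliWeight_nonneg {p : ℝ} (hp0 : 0 ≤ p) (hp1 : p ≤ 1) (a : V → Bool) :
    0 ≤ bernoulliWeight p a :=
  prod_nonneg fun v _ => by split_ifs <;> linarith

theorem card_selected (a : V → Bool) :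
    ((selected a).card : ℝ) = ∑ v, if a v = true then 1 else 0 := by
  rw [selected, card_filter]
  push_cast
  rfl

variable [DecidableEq V]

theorem sum_bernoulliWeight_mul_prod (p : ℝ) (h : V → Bool → ℝ) :
    ∑ b : V → Bool, bernoulliWeight p b * ∏ v, h v (b v)
      = ∏ v, (p * h v true + (1 - p) * h v false) := by
  simp only [bernoulliWeight, ← prod_mul_distrib]
  rw [← Fintype.prod_sum (fun v x => (if x then p else 1 - p) * h v x)]
  simp

theorem sum_bernoulliWeight (p : ℝ) : ∑ b : V → Bool, bernoulliWeight p b = 1 := by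
  simpa using sum_bernoulliWeight_mul_prod (V := V) p (fun _ _ => 1)

theorem sum_bernoulliWeight_disjoint (p : ℝ) (s : Finset V) :
    ∑ b : V → Bool, bernoulliWeight p b * (if Disjoint s (selected b) then 1 else 0)
      = (1 - p) ^ s.card := by
  have hind : ∀ b : V → Bool, (if Disjoint s (selected b) then (1 : ℝ) else 0)
      = ∏ v, if v ∈ s ∧ b v = true then 0 else 1 := by
    intro b
    by_cases hd : Disjoint s (selected b)
    · rw [if_pos hd]
      exact (prod_eq_one fun v _ => if_neg fun h =>
        disjoint_left.1 hd h.1 (mem_filter.2 ⟨mem_univ v, h.2⟩)).symm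
    · obtain ⟨v, hvs, hvb⟩ := not_disjoint_iff.1 hd
      rw [if_neg hd]
      refine (prod_eq_zero (i := v) (mem_univ v) ?_).symm
      exact if_pos ⟨hvs, (mem_filter.1 hvb).2⟩
  simp only [hind]
  calc _ = ∏ v, if v ∈ s then 1 - p else 1 :=
        (sum_bernoulliWeight_mul_prod p fun v x => if v ∈ s ∧ x = true then 0 else 1).trans
          (prod_congr rfl fun v _ => by split_ifs <;> simp_all)
    _ = (1 - p) ^ s.card := by rw [prod_ite_mem, univ_inter, prod_const]

theorem sum_bernoulliWeight_filter_card_le_half_le {p : ℝ} (hp0 : 0 ≤ p) (hp1 : p ≤ 1) :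
    ∑ a ∈ univ.filter (fun a : V → Bool => ((selected a).card : ℝ) ≤ Fintype.card V * p / 2),
        bernoulliWeight p a
      ≤ Real.exp (-((1 - Real.log 2) / 2 * (Fintype.card V * p))) := by
  simpa only [card_selected, bernoulliWeight] using
    sum_prod_filter_count_le_half_le_exp (ι := V) hp0 hp1

theorem codewordKernel_nonneg (s t : Finset V) (v : V) : 0 ≤ codewordKernel s t v := by
  unfold codewordKernel
  split_ifs
  exacts [uniformOn_nonneg _ _, by positivity]

theorem sum_codewordKernel [Nonempty V] (s t : Finset V) : ∑ v, codewordKernel s t v = 1 := by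
  unfold codewordKernel
  split_ifs with h
  · exact sum_uniformOn h
  · rw [sum_const, card_univ, nsmul_eq_mul, mul_inv_cancel₀ (by positivity)]

theorem codewordKernel_of_notMem {s : Finset V} {v : V} (hv : v ∉ s) (t : Finset V) :
    codewordKernel s t v = (if Disjoint s t then 1 else 0) * (Fintype.card V : ℝ)⁻¹ := by
  by_cases h : (s ∩ t).Nonempty
  · have hst : ¬Disjoint s t := by
      rwa [disjoint_iff_inter_eq_empty, ← ne_eq, ← nonempty_iff_ne_empty]
    simp [codewordKernel, h, hst, uniformOn, hv]
  · have hst : Disjoint s t := by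
      rwa [disjoint_iff_inter_eq_empty, ← not_nonempty_iff_eq_empty]
    simp [codewordKernel, h, hst]

theorem codewordLaw_nonneg {p : ℝ} (hp0 : 0 ≤ p) (hp1 : p ≤ 1) (s : Finset V) (v : V) :
    0 ≤ codewordLaw p s v :=
  sum_nonneg fun b _ =>
    mul_nonneg (bernoulliWeight_nonneg hp0 hp1 b) (codewordKernel_nonneg _ _ _)

theorem sum_codewordLaw [Nonempty V] (p : ℝ) (s : Finset V) : ∑ v, codewordLaw p s v = 1 := by
  simp only [codewordLaw]
  rw [sum_comm]
  simp only [← mul_sum, sum_codewordKernel, mul_one, sum_bernoulliWeight]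

/-- A codeword index outside `s` can only come from the fallback, when `V_{m_𝒵}` misses `s`. -/
theorem codewordLaw_of_notMem (p : ℝ) {s : Finset V} {v : V} (hv : v ∉ s) :
    codewordLaw p s v = (1 - p) ^ s.card / Fintype.card V := by
  simp only [codewordLaw, codewordKernel_of_notMem hv, ← mul_assoc, ← sum_mul,
    sum_bernoulliWeight_disjoint, div_eq_mul_inv]

theorem codewordLaw_perm (p : ℝ) {s : Finset V} (σ : Equiv.Perm V) (hσ : ∀ u, σ u ∈ s ↔ u ∈ s)
    (v : V) : codewordLaw p s (σ v) = codewordLaw p s v := by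
  refine Fintype.sum_equiv (σ.symm.arrowCongr (Equiv.refl Bool)) _ _ fun b => ?_
  have hsel : s ∩ selected (b ∘ σ) = (s ∩ selected b).map σ.symm.toEmbedding := by
    ext u
    simp [selected, mem_map_equiv, hσ]
  have hb : bernoulliWeight p (b ∘ σ) = bernoulliWeight p b :=
    Equiv.prod_comp σ fun u => if b u then p else 1 - p
  change _ = bernoulliWeight p (b ∘ σ) * codewordKernel s (selected (b ∘ σ)) v
  simp only [hb, codewordKernel, hsel, map_nonempty]
  simp [uniformOn, mem_map_equiv]

theorem codewordLaw_eq_of_mem (p : ℝ) {s : Finset V} {v w : V} (hv : v ∈ s) (hw : w ∈ s) :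
    codewordLaw p s v = codewordLaw p s w := by
  have hswap : ∀ u, Equiv.swap w v u ∈ s ↔ u ∈ s := by
    intro u
    rw [Equiv.swap_apply_def]
    split_ifs with h1 h2 <;> simp_all
  simpa using codewordLaw_perm p (Equiv.swap w v) hswap w

theorem tvDist_codewordLaw_le {p : ℝ} (hp0 : 0 ≤ p) (hp1 : p ≤ 1) {s : Finset V}
    (hs : s.Nonempty) : tvDist (codewordLaw p s) (uniformOn s) ≤ (1 - p) ^ s.card := by
  have : Nonempty V := hs.elim fun v _ => ⟨v⟩
  rw [tvDist_uniformOn_eq (codewordLaw_nonneg hp0 hp1 s) (sum_codewordLaw p s) hs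
      fun v hv w hw => codewordLaw_eq_of_mem p hv hw,
    sum_congr rfl fun v hv => codewordLaw_of_notMem p (mem_compl.1 hv), sum_const, nsmul_eq_mul,
    mul_div_assoc', div_le_iff₀ (by positivity)]
  have hcard : (sᶜ.card : ℝ) ≤ Fintype.card V := by exact_mod_cast card_le_univ _
  exact mul_comm ((1 - p) ^ s.card) (Fintype.card V : ℝ) ▸
    mul_le_mul_of_nonneg_right hcard (pow_nonneg (by linarith) _)

end IndexSets

theorem sum_prod_mul_apply {M S : Type*} [Fintype M] [DecidableEq M] [Fintype S]
    (G : M → S → ℝ) {m₀ : M} (hG : ∀ m, m ≠ m₀ → ∑ s, G m s = 1) (Φ : S → ℝ) :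
    ∑ f : M → S, (∏ m, G m (f m)) * Φ (f m₀) = ∑ s, G m₀ s * Φ s := by
  have hprod : ∀ f : M → S, (∏ m, G m (f m)) * Φ (f m₀)
      = ∏ m, G m (f m) * (if m = m₀ then Φ (f m) else 1) := by
    intro f
    rw [prod_mul_distrib, prod_ite_eq' univ m₀, if_pos (mem_univ _)]
  simp only [hprod]
  rw [← Fintype.prod_sum (fun m s => G m s * (if m = m₀ then Φ s else 1)),
    ← prod_erase_mul univ _ (mem_univ m₀),
    prod_eq_one fun m hm => by simp [if_neg (ne_of_mem_erase hm), hG m (ne_of_mem_erase hm)]]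
  simp

/-- Marginal of the construction (row sets `a m`, column sets `b m'`, entries `c m m'`) on row
`m₀`: given its set `x`, the entries of the row are i.i.d., because the column sets are
independent. -/
theorem sum_prod_kernel_mul_apply {My Mz V A : Type*} [Fintype My] [Fintype Mz] [Fintype V]
    [Fintype A] [DecidableEq My] [DecidableEq Mz] (β₁ β₂ : A → ℝ) (hβ₁ : ∑ x, β₁ x = 1)
    (w : A → A → V → ℝ) (hw : ∀ x y, ∑ v, w x y v = 1) (m₀ : My) (F : A → (Mz → V) → ℝ) :
    ∑ a : My → A, ∑ b : Mz → A, ∑ c : My → Mz → V,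
        (∏ m, β₁ (a m)) * (∏ m, β₂ (b m)) * (∏ m, ∏ m', w (a m) (b m') (c m m')) *
          F (a m₀) (c m₀)
      = ∑ x, β₁ x * ∑ r : Mz → V, (∏ m', ∑ y, β₂ y * w x y (r m')) * F x r := by
  have hrow : ∀ (a : My → A) (b : Mz → A),
      ∑ c : My → Mz → V, (∏ m, ∏ m', w (a m) (b m') (c m m')) * F (a m₀) (c m₀)
        = ∑ r : Mz → V, (∏ m', w (a m₀) (b m') (r m')) * F (a m₀) r := by
    intro a b
    have hG : ∀ m, m ≠ m₀ → ∑ r : Mz → V, ∏ m', w (a m) (b m') (r m') = 1 := fun m _ => by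
      rw [← Fintype.prod_sum fun m' v => w (a m) (b m') v]
      exact prod_eq_one fun m' _ => hw _ _
    exact (sum_prod_mul_apply (fun m r => ∏ m', w (a m) (b m') (r m')) hG (F (a m₀)) :)
  have hcol : ∀ x : A,
      ∑ b : Mz → A, (∏ m, β₂ (b m)) * ∑ r : Mz → V, (∏ m', w x (b m') (r m')) * F x r
        = ∑ r : Mz → V, (∏ m', ∑ y, β₂ y * w x y (r m')) * F x r := by
    intro x
    simp only [mul_sum]
    rw [sum_comm]
    refine sum_congr rfl fun r _ => ?_
    simp only [← mul_assoc, ← prod_mul_distrib, ← sum_mul]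
    rw [← Fintype.prod_sum (fun m' y => β₂ y * w x y (r m'))]
  calc _ = ∑ a : My → A, (∏ m, β₁ (a m)) * ∑ b : Mz → A, (∏ m, β₂ (b m)) *
          ∑ c : My → Mz → V, (∏ m, ∏ m', w (a m) (b m') (c m m')) * F (a m₀) (c m₀) := by
        simp only [mul_sum, mul_assoc]
    _ = ∑ a : My → A, (∏ m, β₁ (a m)) *
          ∑ r : Mz → V, (∏ m', ∑ y, β₂ y * w (a m₀) y (r m')) * F (a m₀) r := by
        simp only [hrow, hcol]
    _ = _ := (sum_prod_mul_apply (fun (_ : My) x => β₁ x) (m₀ := m₀) (fun _ _ => hβ₁)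
          fun x => ∑ r : Mz → V, (∏ m', ∑ y, β₂ y * w x y (r m')) * F x r :)

/-- `P̃_V^{(m_𝒴)}` as a function of the indicator `a` of `V_{m_𝒴}`. -/
def targetLaw {V : Type*} [Fintype V] [DecidableEq V] (v₀ : V) (a : V → Bool) (v : V) : ℝ :=
  if (selected a).Nonempty then uniformOn (selected a) v else if v = v₀ then 1 else 0

theorem sum_prod_codewordLaw_mul_indicator_le {Mz V : Type*} [Fintype Mz] [DecidableEq Mz]
    [Fintype V] [DecidableEq V] (v₀ : V) {p₁ p₂ ε : ℝ} (hp₁0 : 0 ≤ p₁) (hp₂0 : 0 ≤ p₂)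
    (hp₂1 : p₂ ≤ 1) (hε0 : 0 ≤ ε) (hε1 : ε ≤ 1)
    (hmix : ∀ k : ℕ, Fintype.card V * p₁ / 2 < k → (1 - p₂) ^ k ≤ ε / 2) (x : V → Bool) :
    ∑ r : Mz → V, (∏ m', codewordLaw p₂ (selected x) (r m')) *
        (if ε ≤ tvDist (empirical r) (targetLaw v₀ x) then 1 else 0)
      ≤ (if ((selected x).card : ℝ) ≤ Fintype.card V * p₁ / 2 then 1 else 0)
        + 2 * Fintype.card V * Real.exp (-(Fintype.card Mz * (ε / 2 / Fintype.card V) ^ 2)) := by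
  have : Nonempty V := ⟨v₀⟩
  have hQ0 := codewordLaw_nonneg hp₂0 hp₂1 (selected x)
  simp only [mul_boole, ← sum_filter]
  split_ifs with hsmall
  · calc _ ≤ ∑ r : Mz → V, ∏ m', codewordLaw p₂ (selected x) (r m') :=
          sum_le_sum_of_subset_of_nonneg (filter_subset _ _)
            fun r _ _ => prod_nonneg fun m' _ => hQ0 _
      _ ≤ _ := by
          rw [sum_prod_eq_one (sum_codewordLaw p₂ _)]
          exact le_add_of_nonneg_right (by positivity)
  · have hne : (selected x).Nonempty := by
      rw [← card_pos, ← Nat.cast_pos (α := ℝ)]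
      exact lt_of_le_of_lt (by positivity) (not_le.1 hsmall)
    have htarget : targetLaw v₀ x = uniformOn (selected x) := funext fun v => if_pos hne
    have htv : tvDist (codewordLaw p₂ (selected x)) (targetLaw v₀ x) ≤ ε / 2 :=
      htarget ▸ (tvDist_codewordLaw_le hp₂0 hp₂1 hne).trans (hmix _ (not_le.1 hsmall))
    rw [zero_add]
    exact (sum_prod_filter_le_tvDist_empirical_le_of_tvDist_le (ι := Mz) hQ0
      (sum_codewordLaw p₂ _) hε0 hε1 htv :)

theorem sum_outcome_tvDist_empirical_targetLaw_le {My Mz V : Type*} [Fintype My] [Fintype Mz]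
    [Fintype V] [DecidableEq My] [DecidableEq Mz] [DecidableEq V] (v₀ : V) (m₀ : My)
    {p₁ p₂ ε : ℝ} (hp₁0 : 0 ≤ p₁) (hp₁1 : p₁ ≤ 1) (hp₂0 : 0 ≤ p₂) (hp₂1 : p₂ ≤ 1)
    (hε0 : 0 ≤ ε) (hε1 : ε ≤ 1)
    (hmix : ∀ k : ℕ, Fintype.card V * p₁ / 2 < k → (1 - p₂) ^ k ≤ ε / 2) :
    ∑ a : My → V → Bool, ∑ b : Mz → V → Bool, ∑ c : My → Mz → V,
        (∏ m, bernoulliWeight p₁ (a m)) * (∏ m, bernoulliWeight p₂ (b m)) *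
          (∏ m, ∏ m', codewordKernel (selected (a m)) (selected (b m')) (c m m')) *
          (if ε ≤ tvDist (empirical (c m₀)) (targetLaw v₀ (a m₀)) then 1 else 0)
      ≤ Real.exp (-((1 - Real.log 2) / 2 * (Fintype.card V * p₁)))
        + 2 * Fintype.card V * Real.exp (-(Fintype.card Mz * (ε / 2 / Fintype.card V) ^ 2)) := by
  have : Nonempty V := ⟨v₀⟩
  set B := 2 * (Fintype.card V : ℝ) * Real.exp (-(Fintype.card Mz * (ε / 2 / Fintype.card V) ^ 2))
  refine (sum_prod_kernel_mul_apply (bernoulliWeight p₁) (bernoulliWeight p₂)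
    (sum_bernoulliWeight p₁) (fun x y => codewordKernel (selected x) (selected y))
    (fun x y => sum_codewordKernel _ _) m₀
    fun x r => if ε ≤ tvDist (empirical r) (targetLaw v₀ x) then 1 else 0).trans_le ?_
  calc _ ≤ ∑ x : V → Bool, bernoulliWeight p₁ x *
          ((if ((selected x).card : ℝ) ≤ Fintype.card V * p₁ / 2 then 1 else 0) + B) :=
        sum_le_sum fun x _ => mul_le_mul_of_nonneg_left
          (sum_prod_codewordLaw_mul_indicator_le v₀ hp₁0 hp₂0 hp₂1 hε0 hε1 hmix x)
          (bernoulliWeight_nonneg hp₁0 hp₁1 x)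
    _ = ∑ x ∈ univ.filter (fun x : V → Bool => ((selected x).card : ℝ) ≤ Fintype.card V * p₁ / 2),
          bernoulliWeight p₁ x + B := by
        simp only [mul_add, sum_add_distrib, mul_boole, ← sum_filter, ← sum_mul,
          sum_bernoulliWeight, one_mul]
    _ ≤ _ := by gcongr; exact sum_bernoulliWeight_filter_card_le_half_le hp₁0 hp₁1

def selProb (R Rpool : ℝ) (n : ℕ) : ℝ := Real.exp (-(n * (Rpool - R)))

theorem selProb_le_one {R Rpool : ℝ} (h : R ≤ Rpool) (n : ℕ) : selProb R Rpool n ≤ 1 :=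
  Real.exp_le_one_iff.2 (neg_nonpos.2 (mul_nonneg (Nat.cast_nonneg n) (sub_nonneg.2 h)))

theorem bcWeight_eq (RY RZ RtY RtZ Rpool : ℝ) (n : ℕ) (ω : BCOutcome RY RZ Rpool n) :
    bcWeight RY RZ RtY RtZ Rpool n ω =
      (∏ m, bernoulliWeight (selProb RtY Rpool n) (ω.1 m)) *
        (∏ m, bernoulliWeight (selProb RtZ Rpool n) (ω.2.1 m)) *
        ∏ m, ∏ m', codewordKernel (selected (ω.1 m)) (selected (ω.2.1 m')) (ω.2.2 m m') := by
  simp only [bcWeight, codewordKernel, uniformOn, Fintype.card_fin]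
  rfl

theorem bcWeight_nonneg {RY RZ RtY RtZ Rpool : ℝ} (hY : RtY ≤ Rpool) (hZ : RtZ ≤ Rpool) (n : ℕ)
    (ω : BCOutcome RY RZ Rpool n) : 0 ≤ bcWeight RY RZ RtY RtZ Rpool n ω := by
  rw [bcWeight_eq]
  refine mul_nonneg (mul_nonneg ?_ ?_) (prod_nonneg fun m _ => prod_nonneg fun m' _ =>
    codewordKernel_nonneg _ _ _)
  · exact prod_nonneg fun m _ =>
      bernoulliWeight_nonneg (Real.exp_nonneg _) (selProb_le_one hY n) _
  · exact prod_nonneg fun m _ =>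
      bernoulliWeight_nonneg (Real.exp_nonneg _) (selProb_le_one hZ n) _

theorem PVmy_eq (RY RZ Rpool : ℝ) (n : ℕ) (ω : BCOutcome RY RZ Rpool n) (my : Fin (Kmsg RY n)) :
    PVmy RY RZ Rpool n ω my = empirical (ω.2.2 my) := by
  funext v
  simp only [PVmy, empirical, Fintype.card_fin]

theorem sum_filter_le_tvDist_PVmy_le {RY RZ RtY RtZ Rpool : ℝ} {n : ℕ} (hY : RtY ≤ Rpool)
    (hZ : RtZ ≤ Rpool) {ε : ℝ} (hε0 : 0 ≤ ε) (hε1 : ε ≤ 1)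
    (hmix : ∀ k : ℕ, (Kpool Rpool n : ℝ) * selProb RtY Rpool n / 2 < k →
      (1 - selProb RtZ Rpool n) ^ k ≤ ε / 2) (my : Fin (Kmsg RY n)) :
    ∑ ω ∈ univ.filter (fun ω : BCOutcome RY RZ Rpool n =>
        ε ≤ tvDist (PVmy RY RZ Rpool n ω my) (PtildeVmy RY RZ Rpool n ω my)),
        bcWeight RY RZ RtY RtZ Rpool n ω
      ≤ Real.exp (-((1 - Real.log 2) / 2 * (Kpool Rpool n * selProb RtY Rpool n)))
        + 2 * Kpool Rpool n * Real.exp (-(Kmsg RZ n * (ε / 2 / Kpool Rpool n) ^ 2)) := by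
  have key := sum_outcome_tvDist_empirical_targetLaw_le (Mz := Fin (Kmsg RZ n)) (vstar Rpool n)
    my (p₁ := selProb RtY Rpool n) (p₂ := selProb RtZ Rpool n) (Real.exp_nonneg _)
    (selProb_le_one hY n) (Real.exp_nonneg _) (selProb_le_one hZ n) hε0 hε1
    (by simpa only [Fintype.card_fin] using hmix)
  simp only [Fintype.card_fin] at key
  refine le_of_eq_of_le ?_ key
  rw [sum_filter, Fintype.sum_prod_type]
  refine sum_congr rfl fun a _ => ?_
  rw [Fintype.sum_prod_type]
  refine sum_congr rfl fun b _ => sum_congr rfl fun c _ => ?_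
  rw [bcWeight_eq, PVmy_eq, mul_boole]
  rfl

theorem sum_filter_exists_le_tvDist_le {RY RZ RtY RtZ Rpool : ℝ} {n : ℕ} (hY : RtY ≤ Rpool)
    (hZ : RtZ ≤ Rpool) {ε : ℝ} (hε0 : 0 ≤ ε) (hε1 : ε ≤ 1)
    (hmix : ∀ k : ℕ, (Kpool Rpool n : ℝ) * selProb RtY Rpool n / 2 < k →
      (1 - selProb RtZ Rpool n) ^ k ≤ ε / 2) :
    ∑ ω ∈ univ.filter (fun ω : BCOutcome RY RZ Rpool n =>
        ∃ my, ε ≤ tvDist (PVmy RY RZ Rpool n ω my) (PtildeVmy RY RZ Rpool n ω my)),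
        bcWeight RY RZ RtY RtZ Rpool n ω
      ≤ Kmsg RY n * (Real.exp (-((1 - Real.log 2) / 2 * (Kpool Rpool n * selProb RtY Rpool n)))
        + 2 * Kpool Rpool n * Real.exp (-(Kmsg RZ n * (ε / 2 / Kpool Rpool n) ^ 2))) := by
  refine (sum_filter_exists_le_sum_sum_filter (bcWeight_nonneg hY hZ n) _).trans ?_
  refine (sum_le_sum fun my _ => sum_filter_le_tvDist_PVmy_le hY hZ hε0 hε1 hmix my).trans ?_
  rw [sum_const, card_univ, Fintype.card_fin, nsmul_eq_mul]

theorem eventually_add_mul_le_exp (c₀ c₁ : ℝ) {σ : ℝ} (hσ : 0 < σ) :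
    ∀ᶠ n : ℕ in Filter.atTop, c₀ + c₁ * n ≤ Real.exp (n * σ) := by
  set C := |c₀| + |c₁|
  have hC : 0 ≤ C := by positivity
  filter_upwards [tendsto_natCast_atTop_atTop.eventually_ge_atTop (2 * C / σ ^ 2 + 1)] with n hn
  have hn1 : 1 ≤ (n : ℝ) := le_trans (le_add_of_nonneg_left (by positivity)) hn
  have hCn : 2 * C ≤ σ ^ 2 * n := by
    have := (div_le_iff₀ (by positivity)).1 (show 2 * C / σ ^ 2 ≤ n by linarith)
    linarith
  have hquad : C * n ≤ (n * σ) ^ 2 / 2 := by nlinarith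
  have habs : c₀ + c₁ * n ≤ C * n := by
    nlinarith [le_abs_self c₀, le_abs_self c₁, abs_nonneg c₀, abs_nonneg c₁]
  have hx : 0 ≤ n * σ := by positivity
  linarith [Real.quadratic_le_exp_of_nonneg hx]

theorem Kmsg_le (R : ℝ) (n : ℕ) : (Kmsg R n : ℝ) ≤ 2 * Real.exp (Real.exp (n * R)) := by
  have h1 := Real.one_le_exp (Real.exp_pos (n * R)).le
  unfold Kmsg
  linarith [Nat.ceil_lt_add_one (Real.exp_pos (Real.exp (n * R))).le]

theorem Kpool_le {Rpool : ℝ} (hR : 0 ≤ Rpool) (n : ℕ) :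
    (Kpool Rpool n : ℝ) ≤ 2 * Real.exp (n * Rpool) := by
  have h1 := Real.one_le_exp (mul_nonneg (Nat.cast_nonneg n) hR)
  unfold Kpool
  linarith [Nat.ceil_lt_add_one (Real.exp_pos (n * Rpool)).le]

theorem exp_le_Kpool_mul_selProb (R Rpool : ℝ) (n : ℕ) :
    Real.exp (n * R) ≤ Kpool Rpool n * selProb R Rpool n := by
  calc Real.exp (n * R) = Real.exp (n * Rpool) * selProb R Rpool n := by
        rw [selProb, ← Real.exp_add]; ring_nf
    _ ≤ _ := mul_le_mul_of_nonneg_right (Nat.le_ceil _) (Real.exp_nonneg _)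

theorem eventually_one_sub_selProb_pow_le {RtY RtZ Rpool : ℝ} (hZ : RtZ ≤ Rpool)
    (hpool : Rpool < RtY + RtZ) :
    ∀ᶠ n : ℕ in Filter.atTop, ∀ k : ℕ, (Kpool Rpool n : ℝ) * selProb RtY Rpool n / 2 < k →
      (1 - selProb RtZ Rpool n) ^ k ≤ Real.exp (-(n * 1)) / 2 := by
  filter_upwards [eventually_add_mul_le_exp (2 * Real.log 2) 2 (sub_pos.2 hpool)] with n hn k hk
  set p₂ := selProb RtZ Rpool n
  have hp₂0 : 0 ≤ p₂ := Real.exp_nonneg _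
  have hprod : Real.exp (n * (RtY + RtZ - Rpool)) ≤ Kpool Rpool n * selProb RtY Rpool n * p₂ := by
    calc Real.exp (n * (RtY + RtZ - Rpool)) = Real.exp (n * RtY) * p₂ := by
          simp only [p₂, selProb, ← Real.exp_add]; ring_nf
      _ ≤ _ := mul_le_mul_of_nonneg_right (exp_le_Kpool_mul_selProb _ _ _) hp₂0
  have hk₂ := mul_le_mul_of_nonneg_right hk.le hp₂0
  calc (1 - p₂) ^ k ≤ Real.exp (k * -p₂) :=
        one_add_pow_le_exp (by linarith [selProb_le_one hZ n]) k
    _ ≤ Real.exp (-(n * 1) + -Real.log 2) := Real.exp_le_exp.2 (by linarith)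
    _ = Real.exp (-(n * 1)) / 2 := by
        rw [Real.exp_add, Real.exp_neg (Real.log 2), Real.exp_log two_pos, div_eq_mul_inv]

theorem eventually_Kmsg_mul_exp_le {RY RtY : ℝ} (Rpool : ℝ) (hY0 : 0 ≤ RY) (hY1 : RY < RtY) :
    ∀ᶠ n : ℕ in Filter.atTop, (Kmsg RY n : ℝ) *
        Real.exp (-((1 - Real.log 2) / 2 * (Kpool Rpool n * selProb RtY Rpool n)))
      ≤ 2 * Real.exp (-n) := by
  set c := (1 - Real.log 2) / 2
  have hc : 0 < c := by have := Real.log_two_lt_d9; norm_num [c]; linarith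
  filter_upwards [eventually_add_mul_le_exp c⁻¹ c⁻¹ (sub_pos.2 hY1)] with n hn
  set A := Real.exp (n * RY)
  have hA : 1 ≤ A := Real.one_le_exp (mul_nonneg (Nat.cast_nonneg n) hY0)
  have hgrow : A + n ≤ c * Real.exp (n * RtY) := by
    have h1 : 1 + n ≤ c * Real.exp (n * (RtY - RY)) := by
      have := mul_le_mul_of_nonneg_left hn hc.le
      rwa [mul_add, ← mul_assoc, mul_inv_cancel₀ hc.ne', one_mul] at this
    have h2 : Real.exp (n * RtY) = A * Real.exp (n * (RtY - RY)) := by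
      rw [← Real.exp_add]; ring_nf
    rw [h2]
    nlinarith [mul_le_mul_of_nonneg_left h1 (zero_le_one.trans hA)]
  calc (Kmsg RY n : ℝ) * Real.exp (-(c * (Kpool Rpool n * selProb RtY Rpool n)))
      ≤ (2 * Real.exp A) * Real.exp (-(c * Real.exp (n * RtY))) := by
        gcongr
        · exact Kmsg_le RY n
        · exact exp_le_Kpool_mul_selProb RtY Rpool n
    _ = 2 * Real.exp (A - c * Real.exp (n * RtY)) := by rw [Real.exp_sub, Real.exp_neg]; ring
    _ ≤ 2 * Real.exp (-n) := by gcongr; linarith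

theorem eventually_Kmsg_mul_Kpool_mul_exp_le {RY RZ Rpool : ℝ} (hY0 : 0 ≤ RY) (hZ0 : 0 < RZ)
    (hpool : 0 ≤ Rpool) :
    ∀ᶠ n : ℕ in Filter.atTop, (Kmsg RY n : ℝ) * (2 * Kpool Rpool n *
        Real.exp (-(Kmsg RZ n * (Real.exp (-(n * 1)) / 2 / Kpool Rpool n) ^ 2)))
      ≤ 8 * Real.exp (-n) := by
  filter_upwards [eventually_add_mul_le_exp (2 * Real.log 4) (RY + 3 * Rpool + 3) hZ0] with n hn
  set A := Real.exp (n * RY)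
  set P := Real.exp (n * Rpool)
  set K := (Kpool Rpool n : ℝ)
  set w := -(n * 1) - n * Rpool - Real.log 4
  set U := Real.exp (n * RZ) + 2 * w
  have hA : 1 ≤ A := Real.one_le_exp (mul_nonneg (Nat.cast_nonneg n) hY0)
  have hPK : P ≤ K := Nat.le_ceil _
  have hKP : K ≤ 2 * P := Kpool_le hpool n
  have hP : 0 < P := Real.exp_pos _
  have hw : Real.exp w = Real.exp (-(n * 1)) / (4 * P) := by
    rw [Real.exp_sub, Real.exp_sub, Real.exp_log (by norm_num), div_div, mul_comm P]
  have htail : Real.exp U ≤ Kmsg RZ n * (Real.exp (-(n * 1)) / 2 / K) ^ 2 := by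
    have hsmall : Real.exp (-(n * 1)) / (4 * P) ≤ Real.exp (-(n * 1)) / 2 / K := by
      rw [div_div]
      exact div_le_div_of_nonneg_left (Real.exp_nonneg _) (by linarith) (by linarith)
    rw [Real.exp_add, two_mul, Real.exp_add, hw, ← sq]
    exact mul_le_mul (Nat.le_ceil _) (pow_le_pow_left₀ (by positivity) hsmall 2) (by positivity)
      (by positivity)
  have hU : A + n * Rpool + n ≤ Real.exp U := by
    calc A + n * Rpool + n ≤ A * (1 + n * (Rpool + 1)) := by
          nlinarith [mul_nonneg (Nat.cast_nonneg n : (0 : ℝ) ≤ n) (by linarith : 0 ≤ Rpool + 1)]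
      _ ≤ A * Real.exp (n * (Rpool + 1)) := by
          gcongr
          linarith [Real.add_one_le_exp (n * (Rpool + 1))]
      _ = Real.exp (n * (RY + Rpool + 1)) := by rw [← Real.exp_add]; ring_nf
      _ ≤ Real.exp U := Real.exp_le_exp.2 (by simp only [U, w]; linarith)
  calc (Kmsg RY n : ℝ) * (2 * K * Real.exp (-(Kmsg RZ n * (Real.exp (-(n * 1)) / 2 / K) ^ 2)))
      ≤ (2 * Real.exp A) * (2 * (2 * P) * Real.exp (-Real.exp U)) := by
        gcongr
        exact Kmsg_le RY n
    _ = 8 * Real.exp (A + n * Rpool - Real.exp U) := by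
        simp only [P, Real.exp_sub, Real.exp_add, Real.exp_neg]
        ring
    _ ≤ 8 * Real.exp (-n) := by gcongr; linarith

end BCCode

theorem bc_random_code_tv_claim_general
    (RY RZ RtY RtZ Rpool : ℝ)
    (hY0 : 0 < RY) (hY1 : RY < RtY) (hY2 : RtY < Rpool)
    (hZ0 : 0 < RZ) (hZ2 : RtZ < Rpool)
    (hpool : Rpool < RtY + RtZ) :
    ∃ τ : ℝ, 0 < τ ∧
      Filter.Tendsto
        (fun n : ℕ =>
          ∑ ω ∈ Finset.univ.filter
              (fun ω : BCOutcome RY RZ Rpool n =>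
                ∃ my, Real.exp (-(n * τ)) ≤
                  tvDist (PVmy RY RZ Rpool n ω my) (PtildeVmy RY RZ Rpool n ω my)),
            bcWeight RY RZ RtY RtZ Rpool n ω)
        Filter.atTop (nhds 0) := by
  refine ⟨1, one_pos, ?_⟩
  have hlim : Filter.Tendsto (fun n : ℕ => 10 * Real.exp (-n)) Filter.atTop (nhds 0) := by
    simpa using (Real.tendsto_exp_neg_atTop_nhds_zero.comp tendsto_natCast_atTop_atTop).const_mul 10
  refine squeeze_zero' (Filter.Eventually.of_forall fun n =>
    sum_nonneg fun ω _ => BCCode.bcWeight_nonneg hY2.le hZ2.le n ω) ?_ hlim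
  filter_upwards [BCCode.eventually_one_sub_selProb_pow_le hZ2.le hpool,
    BCCode.eventually_Kmsg_mul_exp_le Rpool hY0.le hY1,
    BCCode.eventually_Kmsg_mul_Kpool_mul_exp_le hY0.le hZ0 (hY0.trans (hY1.trans hY2)).le]
    with n hmix hsmallSet hfarLaw
  have hε1 : Real.exp (-(n * 1)) ≤ 1 :=
    Real.exp_le_one_iff.2 (neg_nonpos.2 (mul_nonneg (Nat.cast_nonneg n) zero_le_one))
  refine (BCCode.sum_filter_exists_le_tvDist_le hY2.le hZ2.le (Real.exp_nonneg _) hε1 hmix).trans ?_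
  rw [mul_add]
  linarith

/-- **inequality (69).** In the random BC code construction,
there is `τ > 0` such that the probability that
`max_{m_Y} d(P_V^{(m_Y)}, P̃_V^{(m_Y)}) ≥ e^{-nτ}` tends to zero as `n → ∞`. -/
theorem bc_random_code_tv_claim
    (RY RZ RtY RtZ Rpool : ℝ)
    (hY0 : 0 < RY) (hY1 : RY < RtY) (hY2 : RtY < Rpool)
    (hZ0 : 0 < RZ) (hZ1 : RZ < RtZ) (hZ2 : RtZ < Rpool)
    (hpool : Rpool < RtY + RtZ) :
    ∃ τ : ℝ, 0 < τ ∧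
      Filter.Tendsto
        (fun n : ℕ =>
          ∑ ω ∈ Finset.univ.filter
              (fun ω : BCOutcome RY RZ Rpool n =>
                ∃ my, Real.exp (-(n * τ)) ≤
                  tvDist (PVmy RY RZ Rpool n ω my) (PtildeVmy RY RZ Rpool n ω my)),
            bcWeight RY RZ RtY RtZ Rpool n ω)
        Filter.atTop (nhds 0) :=
  bc_random_code_tv_claim_general RY RZ RtY RtZ Rpool hY0 hY1 hY2 hZ0 hZ2 hpool
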